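/- arXiv:1108.1539 — 5 statements merged into one kernel-verified Lean document; each statement's English description precedes it below -/
import Mathlib

section
/- Let K be a field of characteristic zero and H a finite group. Let S be a crossed product of a ring R by H, where R and S are K-algebras and the inclusion R ↪ S is a unital K-algebra homomorphism. Let A be a ring and f : S → A a ring homomorphism such that A, regarded as a left R-module via the restriction of f to R, is flat. Then A, regarded as a left S-module via f, is flat. -/
open Finset

/-- `A` is flat as a left module over `S`, where the `S`-module structure on `A` comes from the
ring homomorphism `f : S →+* A` (i.e. `s • a = f s * a`).  Flatness is expressed through the
standard equational criterion (valid over arbitrary, possibly noncommutative, rings):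
whenever `∑ i, s i • a i = 0`, the vector `a` factors through the "relations" of `s`. -/
def RingHom.LeftFlat {S A : Type*} [Ring S] [Ring A] (f : S →+* A) : Prop :=
  ∀ (n : ℕ) (s : Fin n → S) (a : Fin n → A),
    (∑ i, f (s i) * a i) = 0 →
      ∃ (m : ℕ) (b : Fin n → Fin m → S) (a' : Fin m → A),
        (∀ i, a i = ∑ j, f (b i j) * a' j) ∧ ∀ j, (∑ i, s i * b i j) = 0

lemma leftFlat_fintype {S A : Type*} [Ring S] [Ring A] (f : S →+* A) (hf : f.LeftFlat)
    {ι : Type*} [Fintype ι] (s : ι → S) (a : ι → A)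
    (h : ∑ i, f (s i) * a i = 0) :
    ∃ (m : ℕ) (b : ι → Fin m → S) (a' : Fin m → A),
      (∀ i, a i = ∑ j, f (b i j) * a' j) ∧ ∀ j, ∑ i, s i * b i j = 0 := by
  classical
  let e := Fintype.equivFin ι
  obtain ⟨m, b, a', h1, h2⟩ := hf (Fintype.card ι) (s ∘ e.symm) (a ∘ e.symm) (by
    rw [← h]
    exact e.symm.sum_comp (fun i => f (s i) * a i))
  refine ⟨m, fun i j => b (e i) j, a', fun i => ?_, fun j => ?_⟩
  · have := h1 (e i)
    simpa using this
  · rw [← h2 j]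
    exact (e.symm.sum_comp (fun i => s i * b (e i) j)).symm.trans (by simp)

lemma leftFlat_multi {S A : Type*} [Ring S] [Ring A] (f : S →+* A) (hf : f.LeftFlat)
    (p : ℕ) :
    ∀ (n : ℕ) (s : Fin p → Fin n → S) (a : Fin n → A),
      (∀ k, ∑ i, f (s k i) * a i = 0) →
      ∃ (m : ℕ) (b : Fin n → Fin m → S) (a' : Fin m → A),
        (∀ i, a i = ∑ j, f (b i j) * a' j) ∧ ∀ k j, ∑ i, s k i * b i j = 0 := by
  induction p with
  | zero =>
    intro n s a _
    refine ⟨n, fun i j => if j = i then 1 else 0, a,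
      fun i => ?_, fun k => k.elim0⟩
    simp [apply_ite f, Finset.sum_ite_eq']
  | succ p IH =>
    intro n s a h
    obtain ⟨m₁, b₁, a₁, h1, h2⟩ := hf n (s 0) a (h 0)
    have hrel : ∀ k : Fin p, ∑ j, f ((∑ i, s k.succ i * b₁ i j)) * a₁ j = 0 := by
      intro k
      calc ∑ j, f (∑ i, s k.succ i * b₁ i j) * a₁ j
          = ∑ j, ∑ i, f (s k.succ i) * (f (b₁ i j) * a₁ j) := by
            simp [map_sum, Finset.sum_mul, mul_assoc]
        _ = ∑ i, f (s k.succ i) * (∑ j, f (b₁ i j) * a₁ j) := by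
            rw [Finset.sum_comm]; simp [Finset.mul_sum]
        _ = ∑ i, f (s k.succ i) * a i := by
            refine Finset.sum_congr rfl fun i _ => ?_; rw [← h1 i]
        _ = 0 := h k.succ
    obtain ⟨m, b₂, a', h1', h2'⟩ := IH m₁ (fun k j => ∑ i, s k.succ i * b₁ i j) a₁ hrel
    refine ⟨m, fun i l => ∑ j, b₁ i j * b₂ j l, a', fun i => ?_, fun k l => ?_⟩
    · calc a i = ∑ j, f (b₁ i j) * a₁ j := h1 i
        _ = ∑ j, f (b₁ i j) * ∑ l, f (b₂ j l) * a' l := by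
            refine Finset.sum_congr rfl fun j _ => ?_; rw [← h1' j]
        _ = ∑ l, f (∑ j, b₁ i j * b₂ j l) * a' l := by
            simp only [map_sum, map_mul, Finset.mul_sum, Finset.sum_mul, mul_assoc]
            rw [Finset.sum_comm]
    · refine Fin.cases ?_ ?_ k
      · calc ∑ i, s 0 i * ∑ j, b₁ i j * b₂ j l
            = ∑ j, (∑ i, s 0 i * b₁ i j) * b₂ j l := by
              simp only [Finset.mul_sum, Finset.sum_mul, mul_assoc]
              rw [Finset.sum_comm]
          _ = 0 := by simp [h2]
      · intro k'
        calc ∑ i, s k'.succ i * ∑ j, b₁ i j * b₂ j l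
            = ∑ j, (∑ i, s k'.succ i * b₁ i j) * b₂ j l := by
              simp only [Finset.mul_sum, Finset.sum_mul, mul_assoc]
              rw [Finset.sum_comm]
          _ = 0 := h2' k' l

lemma leftFlat_multi_fintype {S A : Type*} [Ring S] [Ring A] (f : S →+* A) (hf : f.LeftFlat)
    (p : ℕ) {ι : Type*} [Fintype ι] (s : Fin p → ι → S) (a : ι → A)
    (h : ∀ k, ∑ i, f (s k i) * a i = 0) :
    ∃ (m : ℕ) (b : ι → Fin m → S) (a' : Fin m → A),
      (∀ i, a i = ∑ j, f (b i j) * a' j) ∧ ∀ k j, ∑ i, s k i * b i j = 0 := by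
  classical
  let e := Fintype.equivFin ι
  obtain ⟨m, b, a', h1, h2⟩ := leftFlat_multi f hf p (Fintype.card ι)
    (fun k i => s k (e.symm i)) (fun i => a (e.symm i)) (by
      intro k
      rw [← h k]
      exact e.symm.sum_comp (fun i => f (s k i) * a i))
  refine ⟨m, fun i j => b (e i) j, a', fun i => ?_, fun k j => ?_⟩
  · have := h1 (e i)
    simpa using this
  · rw [← h2 k j]
    exact (e.symm.sum_comp (fun i => s k i * b (e i) j)).symm.trans (by simp)

/-- **Ardakov's lemma** (Lemma 2.2 of the paper).  Let `K` be a field of characteristic zero,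
`H` a finite group, and `S` a crossed product of `R` by `H` (with distinguished units `u h`,
`u 1 = 1`, such that `(u h)ₕ` is a left `R`-module basis of `S`, conjugation by each `u h`
preserves `R`, and the twisting `u(xy)⁻¹ u(x) u(y)` lies in `R` together with its inverse),
where `R`, `S` are `K`-algebras and the inclusion `ι : R → S` is a unital `K`-algebra map.
If `f : S → A` is a ring homomorphism such that `A` is flat as a left `R`-module via `f ∘ ι`,
then `A` is flat as a left `S`-module via `f`. -/
theorem flat_of_crossedProduct_flat
    (K : Type*) [Field K] [CharZero K]
    (H : Type*) [Group H] [Fintype H]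
    (R S A : Type*) [Ring R] [Ring S] [Ring A]
    [Algebra K R] [Algebra K S]
    (ι : R →ₐ[K] S) (hinj : Function.Injective ι)
    (u : H → Sˣ) (hu_one : u 1 = 1)
    (hbasis : ∀ s : S, ∃! c : H → R, s = ∑ h : H, ι (c h) * ↑(u h))
    (hconj : ∀ (h : H) (r : R),
      (↑(u h)⁻¹ * ι r * ↑(u h)) ∈ Set.range ι ∧
      (↑(u h) * ι r * ↑(u h)⁻¹) ∈ Set.range ι)
    (htwist : ∀ x y : H,
      (↑(u (x * y))⁻¹ * ↑(u x) * ↑(u y) : S) ∈ Set.range ι ∧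
      (↑((u x * u y)⁻¹) * ↑(u (x * y)) : S) ∈ Set.range ι)
    (f : S →+* A)
    (hflat : (f.comp ι.toRingHom).LeftFlat) :
    f.LeftFlat := by
  classical
  intro n s a hrel
  -- the coordinate functions with respect to the basis (u h)
  choose co hco using fun x : S => (hbasis x).exists
  have hcu : ∀ (x : S) (c : H → R), x = ∑ h : H, ι (c h) * ↑(u h) → c = co x :=
    fun x c hc => (hbasis x).unique hc (hco x)
  -- coordinates of a single basis term
  have hsingle : ∀ (ρ : R) (k : H), co (ι ρ * ↑(u k)) = fun g => if g = k then ρ else 0 := by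
    intro ρ k
    refine (hcu _ _ ?_).symm
    simp [apply_ite ι, ite_mul, Finset.sum_ite_eq']
  -- coordinates of a finite sum
  have hco_sum : ∀ (z : H → S),
      co (∑ i, z i) = fun g => ∑ i, co (z i) g := by
    intro z
    refine (hcu _ _ ?_).symm
    calc ∑ i, z i = ∑ i, ∑ h : H, ι (co (z i) h) * ↑(u h) :=
          Finset.sum_congr rfl fun i _ => hco (z i)
      _ = ∑ h : H, ι (∑ i, co (z i) h) * ↑(u h) := by
          rw [Finset.sum_comm]; simp [map_sum, Finset.sum_mul]
  -- mixed product identity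
  have hmix : ∀ (g' k : H) (r : R), ∃ ρ : R,
      ↑(u g') * ι r * ↑(u k) = ι ρ * ↑(u (g' * k)) := by
    intro g' k r
    obtain ⟨r₁, hr₁⟩ := (hconj g' r).2
    obtain ⟨t, ht⟩ := (htwist g' k).1
    obtain ⟨t₂, ht₂⟩ := (hconj (g' * k) t).2
    refine ⟨r₁ * t₂, ?_⟩
    have e1 : ↑(u g') * ι r = ι r₁ * ↑(u g') := by
      rw [hr₁, mul_assoc, Units.inv_mul, mul_one]
    have e2 : (↑(u g') * ↑(u k) : S) = ↑(u (g' * k)) * ι t := by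
      rw [ht, ← mul_assoc, ← mul_assoc, Units.mul_inv, one_mul]
    have e3 : ↑(u (g' * k)) * ι t = ι t₂ * ↑(u (g' * k)) := by
      rw [ht₂, mul_assoc, Units.inv_mul, mul_one]
    calc ↑(u g') * ι r * ↑(u k) = ι r₁ * (↑(u g') * ↑(u k)) := by rw [e1, mul_assoc]
      _ = ι r₁ * (ι t₂ * ↑(u (g' * k))) := by rw [e2, e3]
      _ = ι (r₁ * t₂) * ↑(u (g' * k)) := by rw [map_mul, mul_assoc]
  -- the key expansion of x * (u g)⁻¹ in terms of the "inverse basis"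
  have hM : ∀ (x : S) (g : H),
      x * ↑(u g)⁻¹ = ∑ g' : H, ↑(u g')⁻¹ * ι (co (↑(u g') * x) g) := by
    intro x g
    have key : ∀ g' h : H, ↑(u g')⁻¹ * ι (co (↑(u g') * (ι (co x h) * ↑(u h))) g)
        = if g' = g * h⁻¹ then ι (co x h) * ↑(u h) * ↑(u g)⁻¹ else 0 := by
      intro g' h
      obtain ⟨ρ, hρ⟩ := hmix g' h (co x h)
      have hrw : (↑(u g') * (ι (co x h) * ↑(u h)) : S) = ι ρ * ↑(u (g' * h)) := by
        rw [← mul_assoc, hρ]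
      rw [hrw, hsingle]
      by_cases hc : g' = g * h⁻¹
      · subst hc
        have hgh : (g * h⁻¹) * h = g := by group
        have h3 : (↑(u (g * h⁻¹)) : S) * (ι (co x h) * ↑(u h) * ↑(u g)⁻¹) = ι ρ := by
          calc ↑(u (g * h⁻¹)) * (ι (co x h) * ↑(u h) * ↑(u g)⁻¹)
              = ↑(u (g * h⁻¹)) * (ι (co x h) * ↑(u h)) * ↑(u g)⁻¹ := by
                rw [← mul_assoc]
            _ = ι ρ * ↑(u (g * h⁻¹ * h)) * ↑(u g)⁻¹ := by rw [hrw]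
            _ = ι ρ := by rw [hgh, mul_assoc, Units.mul_inv, mul_one]
        simp only [hgh, eq_self_iff_true, if_true]
        rw [← h3, ← mul_assoc, Units.inv_mul, one_mul]
      · have hne : ¬ g = g' * h := fun he => hc (by rw [he]; group)
        simp only [if_neg hne, map_zero, mul_zero]
        rw [if_neg hc]
    calc x * ↑(u g)⁻¹
        = (∑ h : H, ι (co x h) * ↑(u h)) * ↑(u g)⁻¹ := by rw [← hco x]
      _ = ∑ h : H, ι (co x h) * ↑(u h) * ↑(u g)⁻¹ := Finset.sum_mul _ _ _
      _ = ∑ h : H, ∑ g' : H,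
            (if g' = g * h⁻¹ then ι (co x h) * ↑(u h) * ↑(u g)⁻¹ else 0) := by
          refine Finset.sum_congr rfl fun h _ => ?_
          simp
      _ = ∑ g' : H, ∑ h : H,
            (if g' = g * h⁻¹ then ι (co x h) * ↑(u h) * ↑(u g)⁻¹ else 0) := Finset.sum_comm
      _ = ∑ g' : H, ∑ h : H,
            ↑(u g')⁻¹ * ι (co (↑(u g') * (ι (co x h) * ↑(u h))) g) := by
          refine Finset.sum_congr rfl fun g' _ => Finset.sum_congr rfl fun h _ => (key g' h).symm
      _ = ∑ g' : H, ↑(u g')⁻¹ * ι (co (↑(u g') * x) g) := by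
          refine Finset.sum_congr rfl fun g' _ => ?_
          conv_rhs => rw [hco x, Finset.mul_sum, hco_sum]
          rw [map_sum, Finset.mul_sum]
  -- the R-linear relations, one for each g' : H
  have hRrel : ∀ g' : H,
      ∑ p : Fin n × H, f (ι (co (↑(u g') * s p.1) p.2)) * (f ↑(u p.2) * a p.1) = 0 := by
    intro g'
    have hinner : ∀ i : Fin n,
        ∑ g : H, f (ι (co (↑(u g') * s i) g)) * (f ↑(u g) * a i)
          = f ↑(u g') * (f (s i) * a i) := by
      intro i
      calc ∑ g : H, f (ι (co (↑(u g') * s i) g)) * (f ↑(u g) * a i)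
          = (∑ g : H, f (ι (co (↑(u g') * s i) g) * ↑(u g))) * a i := by
            simp only [map_mul, Finset.sum_mul, mul_assoc]
        _ = f (∑ g : H, ι (co (↑(u g') * s i) g) * ↑(u g)) * a i := by rw [map_sum]
        _ = f (↑(u g') * s i) * a i := by rw [← hco (↑(u g') * s i)]
        _ = f ↑(u g') * (f (s i) * a i) := by rw [map_mul, mul_assoc]
    calc ∑ p : Fin n × H, f (ι (co (↑(u g') * s p.1) p.2)) * (f ↑(u p.2) * a p.1)
        = ∑ i : Fin n, ∑ g : H, f (ι (co (↑(u g') * s i) g)) * (f ↑(u g) * a i) := by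
          rw [Fintype.sum_prod_type]
      _ = ∑ i : Fin n, f ↑(u g') * (f (s i) * a i) :=
          Finset.sum_congr rfl fun i _ => hinner i
      _ = f ↑(u g') * ∑ i : Fin n, f (s i) * a i := by rw [Finset.mul_sum]
      _ = 0 := by rw [hrel, mul_zero]
  -- apply flatness over R to all |H| relations simultaneously
  set eH := Fintype.equivFin H with heH
  obtain ⟨m, b, a', hb1, hb2⟩ := leftFlat_multi_fintype (f.comp ι.toRingHom) hflat
    (Fintype.card H)
    (fun k (p : Fin n × H) => co (↑(u (eH.symm k)) * s p.1) p.2)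
    (fun (p : Fin n × H) => f ↑(u p.2) * a p.1)
    (fun k => hRrel (eH.symm k))
  have hb1' : ∀ p : Fin n × H, f ↑(u p.2) * a p.1 = ∑ j, f (ι (b p j)) * a' j :=
    fun p => hb1 p
  have hb2' : ∀ (g' : H) (j : Fin m),
      ∑ p : Fin n × H, co (↑(u g') * s p.1) p.2 * b p j = 0 := by
    intro g' j
    have := hb2 (eH g') j
    simpa using this
  -- the scalar 1/|H|
  set k0 : S := algebraMap K S ((Fintype.card H : K)⁻¹) with hk0
  have hcard : f k0 * (Fintype.card H : A) = 1 := by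
    have hne : (Fintype.card H : K) ≠ 0 := Nat.cast_ne_zero.mpr Fintype.card_ne_zero
    have hks : k0 * (Fintype.card H : S) = 1 := by
      rw [hk0, ← map_natCast (algebraMap K S) (Fintype.card H), ← map_mul,
        inv_mul_cancel₀ hne, map_one]
    calc f k0 * (Fintype.card H : A) = f (k0 * (Fintype.card H : S)) := by
          rw [map_mul, map_natCast f]
      _ = 1 := by rw [hks, map_one]
  have hk0c : ∀ x : S, x * k0 = k0 * x := fun x => (Algebra.commutes _ x).symm
  refine ⟨m, fun i j => k0 * ∑ g : H, ↑(u g)⁻¹ * ι (b (i, g) j), a', fun i => ?_, fun j => ?_⟩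
  · -- a i is recovered
    have hstep : ∀ g : H, f ↑(u g)⁻¹ * ∑ j, f (ι (b (i, g) j)) * a' j = a i := by
      intro g
      rw [← hb1' (i, g), ← mul_assoc, ← map_mul, Units.inv_mul, map_one, one_mul]
    calc a i = f k0 * ((Fintype.card H : A) * a i) := by rw [← mul_assoc, hcard, one_mul]
      _ = f k0 * ∑ _g : H, a i := by
          rw [Finset.sum_const, Finset.card_univ, nsmul_eq_mul]
      _ = f k0 * ∑ g : H, (f ↑(u g)⁻¹ * ∑ j, f (ι (b (i, g) j)) * a' j) := by
          rw [Finset.sum_congr rfl fun g _ => (hstep g).symm]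
      _ = ∑ j, f (k0 * ∑ g : H, ↑(u g)⁻¹ * ι (b (i, g) j)) * a' j := by
          simp only [map_mul, map_sum, Finset.mul_sum, Finset.sum_mul, mul_assoc]
          rw [Finset.sum_comm]
  · -- the relations over S
    calc ∑ i, s i * (k0 * ∑ g : H, ↑(u g)⁻¹ * ι (b (i, g) j))
        = ∑ i, ∑ g : H, k0 * (s i * ↑(u g)⁻¹ * ι (b (i, g) j)) := by
          refine Finset.sum_congr rfl fun i _ => ?_
          rw [← mul_assoc, hk0c (s i), mul_assoc, Finset.mul_sum, Finset.mul_sum]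
          refine Finset.sum_congr rfl fun g _ => ?_
          rw [mul_assoc]
      _ = ∑ i, ∑ g : H, ∑ g' : H,
            k0 * (↑(u g')⁻¹ * (ι (co (↑(u g') * s i) g) * ι (b (i, g) j))) := by
          refine Finset.sum_congr rfl fun i _ => Finset.sum_congr rfl fun g _ => ?_
          rw [hM (s i) g, Finset.sum_mul, Finset.mul_sum]
          refine Finset.sum_congr rfl fun g' _ => ?_
          rw [mul_assoc]
      _ = ∑ g' : H, ∑ i, ∑ g : H,
            k0 * (↑(u g')⁻¹ * (ι (co (↑(u g') * s i) g) * ι (b (i, g) j))) := by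
          rw [Finset.sum_congr rfl fun i (_ : i ∈ univ) =>
            (Finset.sum_comm : ∑ g : H, ∑ g' : H,
              k0 * (↑(u g')⁻¹ * (ι (co (↑(u g') * s i) g) * ι (b (i, g) j)))
                = ∑ g' : H, ∑ g : H, _)]
          exact Finset.sum_comm
      _ = ∑ g' : H, k0 * (↑(u g')⁻¹ *
            ι (∑ p : Fin n × H, co (↑(u g') * s p.1) p.2 * b p j)) := by
          refine Finset.sum_congr rfl fun g' _ => ?_
          rw [map_sum, Fintype.sum_prod_type, Finset.mul_sum, Finset.mul_sum]
          refine Finset.sum_congr rfl fun i _ => ?_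
          rw [Finset.mul_sum, Finset.mul_sum]
          refine Finset.sum_congr rfl fun g _ => ?_
          rw [map_mul]
      _ = 0 := by
          rw [Finset.sum_congr rfl fun g' (_ : g' ∈ univ) => by rw [hb2' g' j]]
          simp
end

section
/- Let K be a nonarchimedean normed field, H a finite group, and S a crossed product of a ring R by H, where S is a K-algebra and R a K-subalgebra. Suppose R carries a nonarchimedean K-vector space norm |·| which is submultiplicative (|r r'| ≤ |r| |r'| for all r, r' ∈ R) and such that for every h ∈ H the conjugation automorphism r ↦ u(h)⁻¹ r u(h) of R is an isometry. For μ ∈ S write μ = Σ_{h ∈ H} λ_h(μ) u(h) with unique coefficients λ_h(μ) ∈ R (using that (u h)_{h∈H} is a left R-module basis of S), and define q(μ) := max_{h ∈ H} |λ_h(μ)|. Then for all μ, μ' ∈ S one has q(μ μ') ≤ C · q(μ) · q(μ'), where C := max_{x, y, z ∈ H} |λ_z(u(x) u(y))|. In particular, the multiplication of S is continuous with respect to the topology defined by the norm q. -/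
open Finset


lemma nu_sum_le_sup' {R : Type*} [AddCommMonoid R] (ν : R → ℝ)
    (hν_ultra : ∀ r r' : R, ν (r + r') ≤ max (ν r) (ν r'))
    {α : Type*} (s : Finset α) (hs : s.Nonempty) (f : α → R) :
    ν (∑ i ∈ s, f i) ≤ s.sup' hs fun i => ν (f i) := by
  induction s using Finset.cons_induction with
  | empty => exact absurd hs (by simp)
  | cons a s ha ih =>
    rcases s.eq_empty_or_nonempty with rfl | hs'
    · simp
    · rw [Finset.sum_cons, Finset.sup'_cons hs']
      exact le_trans (hν_ultra _ _) (max_le_max le_rfl (ih hs'))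

/-- (Proposition 2.7 of the paper, key estimate.)  Let `K` be a nonarchimedean normed field,
`H` a finite group, and `S` a crossed product of `R` by `H` (with distinguished units `u h`,
coefficient functions `c s : H → R` expressing every `s ∈ S` uniquely as `∑ h, c s h • u h`),
where `S` is a `K`-algebra and `R` a `K`-subalgebra via `ι`.  Assume `R` carries a
nonarchimedean submultiplicative `K`-vector space norm `ν` for which conjugation by each
`u h` is an isometry.  Then the maximum norm `q μ = max_h ν (c μ h)` on `S` satisfies
`q (μ * μ') ≤ C * q μ * q μ'` where `C = max_{x,y,z} ν (λ_z (u x * u y))`; in particular the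
multiplication of `S` is continuous for the topology defined by `q`. -/
theorem crossedProduct_maxNorm_mul_le
    (K : Type*) [NormedField K] (hK : ∀ a b : K, ‖a + b‖ ≤ max ‖a‖ ‖b‖)
    (H : Type*) [Group H] [Fintype H]
    (R S : Type*) [Ring R] [Ring S] [Algebra K R] [Algebra K S]
    (ι : R →ₐ[K] S) (hinj : Function.Injective ι)
    (u : H → Sˣ) (hu_one : u 1 = 1)
    (c : S → H → R)
    (hc : ∀ s : S, s = ∑ h : H, ι (c s h) * ↑(u h))
    (hc_unique : ∀ (s : S) (d : H → R), s = (∑ h : H, ι (d h) * ↑(u h)) → d = c s)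
    (hconj : ∀ (h : H) (r : R),
      (↑(u h)⁻¹ * ι r * ↑(u h)) ∈ Set.range ι ∧
      (↑(u h) * ι r * ↑(u h)⁻¹) ∈ Set.range ι)
    (htwist : ∀ x y : H,
      (↑(u (x * y))⁻¹ * ↑(u x) * ↑(u y) : S) ∈ Set.range ι ∧
      (↑((u x * u y)⁻¹) * ↑(u (x * y)) : S) ∈ Set.range ι)
    (ν : R → ℝ)
    (hν_nonneg : ∀ r : R, 0 ≤ ν r)
    (hν_def : ∀ r : R, ν r = 0 → r = 0)
    (hν_ultra : ∀ r r' : R, ν (r + r') ≤ max (ν r) (ν r'))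
    (hν_smul : ∀ (k : K) (r : R), ν (k • r) = ‖k‖ * ν r)
    (hν_submul : ∀ r r' : R, ν (r * r') ≤ ν r * ν r')
    (hν_conj_isometry : ∀ (h : H) (r r' : R),
      ι r' = ↑(u h)⁻¹ * ι r * ↑(u h) → ν r' = ν r)
    (μ μ' : S) :
    Finset.univ.sup' Finset.univ_nonempty (fun h : H => ν (c (μ * μ') h)) ≤
      (Finset.univ.sup' Finset.univ_nonempty
          (fun p : H × H × H => ν (c (↑(u p.1) * ↑(u p.2.1)) p.2.2))) *
        (Finset.univ.sup' Finset.univ_nonempty (fun h : H => ν (c μ h))) *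
        (Finset.univ.sup' Finset.univ_nonempty (fun h : H => ν (c μ' h))) := by
  classical
  -- notation
  set a : H → R := c μ with ha
  set b : H → R := c μ' with hb
  -- twisted coefficients: β x y satisfies ι (β x y) = u x * ι (b y) * (u x)⁻¹
  have hβex : ∀ x y : H, ∃ r : R, ι r = ↑(u x) * ι (b y) * ↑(u x)⁻¹ := fun x y =>
    (hconj x (b y)).2
  choose β hβ using hβex
  -- commutation rule
  have hcomm : ∀ x y : H, ↑(u x) * ι (b y) = ι (β x y) * ↑(u x) := by
    intro x y
    rw [hβ]
    simp [mul_assoc]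
  -- conjugation is an isometry, so ν (β x y) = ν (b y)
  have hνβ : ∀ x y : H, ν (β x y) = ν (b y) := by
    intro x y
    refine (hν_conj_isometry x (β x y) (b y) ?_).symm
    rw [hβ]
    simp [mul_assoc]
  -- structure constants
  set t : H → H → H → R := fun x y z => c (↑(u x) * ↑(u y)) z with ht
  have htc : ∀ x y : H, (↑(u x) * ↑(u y) : S) = ∑ z : H, ι (t x y z) * ↑(u z) :=
    fun x y => hc _
  -- the key expansion of μ * μ'
  have hμ := hc μ
  have hμ' := hc μ'
  rw [← ha] at hμ
  rw [← hb] at hμ'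
  have hterm : ∀ x y : H, (ι (a x) * ↑(u x)) * (ι (b y) * ↑(u y)) =
      ∑ z : H, ι (a x * β x y * t x y z) * ↑(u z) := by
    intro x y
    calc (ι (a x) * ↑(u x)) * (ι (b y) * ↑(u y))
        = ι (a x) * (↑(u x) * ι (b y)) * ↑(u y) := by rw [mul_assoc, mul_assoc, mul_assoc]
      _ = ι (a x) * (ι (β x y) * ↑(u x)) * ↑(u y) := by rw [hcomm]
      _ = ι (a x * β x y) * (↑(u x) * ↑(u y)) := by rw [map_mul]; simp only [mul_assoc]
      _ = ι (a x * β x y) * ∑ z : H, ι (t x y z) * ↑(u z) := by rw [← htc]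
      _ = ∑ z : H, ι (a x * β x y * t x y z) * ↑(u z) := by
          rw [Finset.mul_sum]
          refine Finset.sum_congr rfl fun z _ => ?_
          simp only [map_mul, mul_assoc]
  have key : μ * μ' = ∑ z : H, ι (∑ x : H, ∑ y : H, a x * β x y * t x y z) * ↑(u z) := by
    calc μ * μ' = (∑ x : H, ι (a x) * ↑(u x)) * (∑ y : H, ι (b y) * ↑(u y)) := by
          rw [← hμ, ← hμ']
      _ = ∑ x : H, ∑ y : H, (ι (a x) * ↑(u x)) * (ι (b y) * ↑(u y)) := by
          rw [Finset.sum_mul_sum]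
      _ = ∑ x : H, ∑ y : H, ∑ z : H, ι (a x * β x y * t x y z) * ↑(u z) := by
          exact Finset.sum_congr rfl fun x _ => Finset.sum_congr rfl fun y _ => hterm x y
      _ = ∑ x : H, ∑ z : H, ∑ y : H, ι (a x * β x y * t x y z) * ↑(u z) :=
          Finset.sum_congr rfl fun x _ => Finset.sum_comm
      _ = ∑ z : H, ∑ x : H, ∑ y : H, ι (a x * β x y * t x y z) * ↑(u z) :=
          Finset.sum_comm
      _ = ∑ z : H, ι (∑ x : H, ∑ y : H, a x * β x y * t x y z) * ↑(u z) := by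
          refine Finset.sum_congr rfl fun z _ => ?_
          rw [map_sum, Finset.sum_mul]
          refine Finset.sum_congr rfl fun x _ => ?_
          rw [map_sum, Finset.sum_mul]
  have hd : (fun z : H => ∑ x : H, ∑ y : H, a x * β x y * t x y z) = c (μ * μ') :=
    hc_unique (μ * μ') _ key
  -- abbreviations for the three sups
  set C : ℝ := Finset.univ.sup' Finset.univ_nonempty
      (fun p : H × H × H => ν (c (↑(u p.1) * ↑(u p.2.1)) p.2.2)) with hC
  set Q : ℝ := Finset.univ.sup' Finset.univ_nonempty (fun h : H => ν (a h)) with hQ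
  set Q' : ℝ := Finset.univ.sup' Finset.univ_nonempty (fun h : H => ν (b h)) with hQ'
  have hQ0 : 0 ≤ Q := le_trans (hν_nonneg (a (Classical.arbitrary H)))
    (Finset.le_sup' (fun h : H => ν (a h)) (Finset.mem_univ (Classical.arbitrary H)))
  have hQ'0 : 0 ≤ Q' := le_trans (hν_nonneg (b (Classical.arbitrary H)))
    (Finset.le_sup' (fun h : H => ν (b h)) (Finset.mem_univ (Classical.arbitrary H)))
  have hC0 : 0 ≤ C := le_trans (hν_nonneg _)
    (Finset.le_sup' (fun p : H × H × H => ν (c (↑(u p.1) * ↑(u p.2.1)) p.2.2))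
      (Finset.mem_univ (Classical.arbitrary (H × H × H))))
  refine Finset.sup'_le _ _ fun z _ => ?_
  rw [← hd]
  have h1 : ν (∑ x : H, ∑ y : H, a x * β x y * t x y z) ≤
      Finset.univ.sup' Finset.univ_nonempty
        (fun x : H => ν (∑ y : H, a x * β x y * t x y z)) :=
    nu_sum_le_sup' ν hν_ultra _ _ _
  refine le_trans h1 (Finset.sup'_le _ _ fun x _ => ?_)
  refine le_trans (nu_sum_le_sup' ν hν_ultra _ Finset.univ_nonempty _)
    (Finset.sup'_le _ _ fun y _ => ?_)
  -- termwise estimate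
  have e1 : ν (a x * β x y * t x y z) ≤ ν (a x) * ν (β x y) * ν (t x y z) :=
    le_trans (hν_submul _ _)
      (mul_le_mul_of_nonneg_right (hν_submul _ _) (hν_nonneg _))
  have ea : ν (a x) ≤ Q := Finset.le_sup' (fun h : H => ν (a h)) (Finset.mem_univ x)
  have eb : ν (β x y) ≤ Q' := by
    rw [hνβ]; exact Finset.le_sup' (fun h : H => ν (b h)) (Finset.mem_univ y)
  have et : ν (t x y z) ≤ C := Finset.le_sup'
    (fun p : H × H × H => ν (c (↑(u p.1) * ↑(u p.2.1)) p.2.2)) (Finset.mem_univ (x, y, z))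
  calc ν (a x * β x y * t x y z) ≤ ν (a x) * ν (β x y) * ν (t x y z) := e1
    _ ≤ Q * Q' * C :=
        mul_le_mul (mul_le_mul ea eb (hν_nonneg _) hQ0) et (hν_nonneg _) (by positivity)
    _ = C * Q * Q' := by ring
end

section
/- Let R be a commutative ring, L a Lie algebra over R, π an element of R and n a natural number. Let ι : L → U(L) be the canonical map of L into its universal enveloping algebra, and for each i ≥ 0 let F_i denote the R-submodule of U(L) spanned by all products of at most i elements of ι(L), with F_0 = R·1 (equivalently, F_i = P^i where P is the R-submodule spanned by 1 together with the image of ι). Then the R-subalgebra of U(L) generated by the set { π^n · ι(x) : x ∈ L } is equal, as an R-submodule of U(L), to the sum Σ_{i ≥ 0} π^{i n} · F_i. -/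
open Pointwise


private lemma mem_psmul {R M : Type*} [CommRing R] [AddCommGroup M] [Module R M]
    (r : R) (N : Submodule R M) (x : M) :
    x ∈ r • N ↔ ∃ m ∈ N, r • m = x := by
  rw [← SetLike.mem_coe, Submodule.coe_pointwise_smul, Set.mem_smul_set]
  simp only [SetLike.mem_coe]

/-- (Deformations of enveloping algebras, §4.1 of the paper.)  Let `L` be a Lie algebra over a
commutative ring `R`, `π ∈ R` and `n ∈ ℕ`.  Let `ι : L → U(L)` be the canonical map into the
universal enveloping algebra and let `F i = P ^ i` (with
`P = span ({1} ∪ range ι)`) be the PBW-type filtration of `U(L)`.  Then the `R`-subalgebra of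
`U(L)` generated by `{ π ^ n • ι x : x ∈ L }` equals, as an `R`-submodule, the sum
`⨆ i, π ^ (i n) • F i`, i.e. the `n`-th deformation `U(L)ₙ = U(πⁿ L)`. -/
theorem adjoin_smul_ι_eq_deformation
    (R : Type*) [CommRing R] (L : Type*) [LieRing L] [LieAlgebra R L]
    (π : R) (n : ℕ) :
    Subalgebra.toSubmodule (Algebra.adjoin R
        {a : UniversalEnvelopingAlgebra R L |
          ∃ x : L, a = π ^ n • UniversalEnvelopingAlgebra.ι R x}) =
      ⨆ i : ℕ, π ^ (i * n) •
        (Submodule.span R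
            ({1} ∪ Set.range (⇑(UniversalEnvelopingAlgebra.ι R) : L → UniversalEnvelopingAlgebra R L)) ^ i) := by
  set U := UniversalEnvelopingAlgebra R L
  set S : Set U := {a : U | ∃ x : L, a = π ^ n • UniversalEnvelopingAlgebra.ι R x} with hS
  set P : Submodule R U :=
    Submodule.span R ({1} ∪ Set.range (⇑(UniversalEnvelopingAlgebra.ι R) : L → U)) with hP
  apply le_antisymm
  · rw [Algebra.adjoin_eq_span, Submodule.span_le]
    intro a ha
    have : ∃ i : ℕ, a ∈ π ^ (i * n) • P ^ i := by
      induction ha using Submonoid.closure_induction with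
      | mem a h =>
        obtain ⟨x, rfl⟩ := h
        refine ⟨1, ?_⟩
        rw [mem_psmul _ _ _]
        refine ⟨UniversalEnvelopingAlgebra.ι R x, ?_, by rw [one_mul]⟩
        rw [pow_one]
        exact Submodule.subset_span (Or.inr ⟨x, rfl⟩)
      | one =>
        refine ⟨0, ?_⟩
        simp only [Nat.zero_mul, pow_zero, one_smul]
        exact Submodule.one_le.mp le_rfl
      | mul a b _ _ ha hb =>
        obtain ⟨i, hi⟩ := ha
        obtain ⟨j, hj⟩ := hb
        rw [mem_psmul _ _ _] at hi hj
        obtain ⟨x, hx, rfl⟩ := hi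
        obtain ⟨y, hy, rfl⟩ := hj
        refine ⟨i + j, ?_⟩
        rw [mem_psmul _ _ _]
        refine ⟨x * y, by rw [pow_add]; exact Submodule.mul_mem_mul hx hy, ?_⟩
        rw [smul_mul_assoc, mul_smul_comm, ← mul_smul, ← pow_add, ← Nat.add_mul]
    obtain ⟨i, hi⟩ := this
    exact Submodule.mem_iSup_of_mem i hi
  · rw [iSup_le_iff]
    intro i
    have keyP : ∀ y ∈ P, π ^ n • y ∈ Algebra.adjoin R S := by
      intro y hy
      induction hy using Submodule.span_induction with
      | mem y h =>
        rcases h with h | ⟨x, rfl⟩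
        · rw [Set.mem_singleton_iff] at h
          subst h
          rw [← Algebra.algebraMap_eq_smul_one]
          exact Subalgebra.algebraMap_mem _ _
        · exact Algebra.subset_adjoin ⟨x, rfl⟩
      | zero => simpa using zero_mem _
      | add y z _ _ hy hz => rw [smul_add]; exact add_mem hy hz
      | smul r y _ hy => rw [smul_comm (π ^ n) r y]; exact Subalgebra.smul_mem _ hy r
    have key : ∀ i : ℕ, ∀ m ∈ P ^ i, π ^ (i * n) • m ∈ Algebra.adjoin R S := by
      intro i
      induction i with
      | zero =>
        intro m hm
        rw [pow_zero] at hm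
        obtain ⟨r, rfl⟩ := hm
        simp only [Nat.zero_mul, pow_zero, one_smul, LinearMap.toSpanSingleton_apply]
        rw [← Algebra.algebraMap_eq_smul_one]
        exact Subalgebra.algebraMap_mem _ _
      | succ k ih =>
        intro m hm
        rw [pow_succ] at hm
        refine Submodule.mul_induction_on hm ?_ ?_
        · intro x hx y hy
          rw [Nat.succ_mul, pow_add, mul_smul, ← mul_smul_comm, ← smul_mul_assoc]
          exact mul_mem (ih x hx) (keyP y hy)
        · intro x y hx hy
          rw [smul_add]; exact add_mem hx hy
    intro a ha
    rw [mem_psmul _ _ _] at ha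
    obtain ⟨m, hm, rfl⟩ := ha
    rw [Subalgebra.mem_toSubmodule]
    exact key i m hm
end

section
/- Let K be a field, H a finite group, and S a crossed product of a ring R by H with unit map u : H → Sˣ, where S is a K-algebra and R a K-subalgebra. Let K[H] denote the group algebra of H over K. Then the K-linear map Δ : S → S ⊗_K K[H] determined by Δ(r · u(h)) = (r · u(h)) ⊗ h for all r ∈ R and h ∈ H (well defined since (u h)_{h∈H} is a left R-module basis of S) is a homomorphism of unital K-algebras. -/
open Finset TensorProduct

/-- (Used in the proof of Lemma 2.2 of the paper.)  Let `K` be a field, `H` a finite group and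
`S` a crossed product of `R` by `H` (with distinguished units `u h`, `u 1 = 1`, such that
`(u h)ₕ` is a left `R`-module basis of `S`, conjugation by each `u h` preserves `R`, and the
twisting `u(xy)⁻¹ u(x) u(y)` lies in `R` together with its inverse), where `S` is a
`K`-algebra and `R` a `K`-subalgebra via `ι`.  Then the `K`-linear map
`Δ : S → S ⊗[K] K[H]` determined by `Δ(r · u h) = (r · u h) ⊗ h` is a homomorphism of unital
`K`-algebras, i.e. `Δ 1 = 1` and `Δ (a b) = Δ a * Δ b`. -/
theorem crossedProduct_comul_isAlgHom
    (K : Type*) [Field K]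
    (H : Type*) [Group H] [Fintype H]
    (R S : Type*) [Ring R] [Ring S] [Algebra K R] [Algebra K S]
    (ι : R →ₐ[K] S) (hinj : Function.Injective ι)
    (u : H → Sˣ) (hu_one : u 1 = 1)
    (hbasis : ∀ s : S, ∃! c : H → R, s = ∑ h : H, ι (c h) * ↑(u h))
    (hconj : ∀ (h : H) (r : R),
      (↑(u h)⁻¹ * ι r * ↑(u h)) ∈ Set.range ι ∧
      (↑(u h) * ι r * ↑(u h)⁻¹) ∈ Set.range ι)
    (htwist : ∀ x y : H,
      (↑(u (x * y))⁻¹ * ↑(u x) * ↑(u y) : S) ∈ Set.range ι ∧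
      (↑((u x * u y)⁻¹) * ↑(u (x * y)) : S) ∈ Set.range ι)
    (Δ : S →ₗ[K] S ⊗[K] MonoidAlgebra K H)
    (hΔ : ∀ (r : R) (h : H),
      Δ (ι r * ↑(u h)) = (ι r * ↑(u h)) ⊗ₜ[K] (MonoidAlgebra.of K H h)) :
    Δ 1 = 1 ∧ ∀ a b : S, Δ (a * b) = Δ a * Δ b := by
  have key : ∀ (r r' : R) (x y : H), ∃ r'' : R,
      (ι r * ↑(u x)) * (ι r' * ↑(u y)) = ι r'' * ↑(u (x * y)) := by
    intro r r' x y
    obtain ⟨a, ha⟩ := (hconj x r').2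
    obtain ⟨t, ht⟩ := (htwist x y).1
    obtain ⟨t', ht'⟩ := (hconj (x * y) t).2
    refine ⟨r * a * t', ?_⟩
    have h1 : (↑(u x) : S) * ι r' = ι a * ↑(u x) := by
      rw [ha, mul_assoc, Units.inv_mul, mul_one]
    have h2 : (↑(u x) : S) * ↑(u y) = ι t' * ↑(u (x * y)) := by
      have e1 : (↑(u x) : S) * ↑(u y) = ↑(u (x * y)) * ι t := by
        rw [ht, ← mul_assoc, ← mul_assoc, Units.mul_inv, one_mul]
      rw [e1, ht', mul_assoc, Units.inv_mul, mul_one]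
    calc ι r * ↑(u x) * (ι r' * ↑(u y))
        = ι r * ((↑(u x) : S) * ι r') * ↑(u y) := by noncomm_ring
      _ = ι r * (ι a * ↑(u x)) * ↑(u y) := by rw [h1]
      _ = ι r * ι a * ((↑(u x) : S) * ↑(u y)) := by noncomm_ring
      _ = ι r * ι a * (ι t' * ↑(u (x * y))) := by rw [h2]
      _ = ι (r * a * t') * ↑(u (x * y)) := by rw [map_mul, map_mul]; noncomm_ring
  constructor
  · have h := hΔ 1 1
    rw [map_one ι, hu_one, Units.val_one, one_mul] at h
    rw [h]
    simp [Algebra.TensorProduct.one_def, MonoidAlgebra.one_def]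
  · intro a b
    obtain ⟨c, hc, -⟩ := hbasis a
    obtain ⟨d, hd, -⟩ := hbasis b
    rw [hc, hd, Finset.sum_mul_sum, map_sum, map_sum, map_sum, Finset.sum_mul_sum]
    refine Finset.sum_congr rfl fun x _ => ?_
    rw [map_sum]
    refine Finset.sum_congr rfl fun y _ => ?_
    obtain ⟨r'', hr''⟩ := key (c x) (d y) x y
    rw [hr'', hΔ, hΔ, hΔ, Algebra.TensorProduct.tmul_mul_tmul,
      ← map_mul (MonoidAlgebra.of K H), ← hr'']
end

section
/- Let H be a group. Let S be a crossed product of a ring R by H with unit map u : H → Sˣ, and let S' be a crossed product of a ring R' by H with unit map u' : H → S'ˣ. Let φ : R → R' be a ring isomorphism such that: (1) for all h ∈ H and r ∈ R, φ( u(h)⁻¹ r u(h) ) = u'(h)⁻¹ φ(r) u'(h), and (2) for all x, y ∈ H, φ( u(xy)⁻¹ u(x) u(y) ) = u'(xy)⁻¹ u'(x) u'(y). Then there exists a unique ring isomorphism Φ : S → S' whose restriction to R equals φ and which satisfies Φ(u(h)) = u'(h) for all h ∈ H. -/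
section
variable {H R S : Type*} [Ring R] [Ring S]

noncomputable def cpT (ι : R →+* S) (u : H → Sˣ) : (H →₀ R) →+ S :=
  Finsupp.liftAddHom fun h => (AddMonoidHom.mulRight (↑(u h) : S)).comp ι.toAddMonoidHom

lemma cpT_apply (ι : R →+* S) (u : H → Sˣ) (c : H →₀ R) :
    cpT ι u c = c.sum fun h r => ι r * ↑(u h) := rfl

lemma cpT_single (ι : R →+* S) (u : H → Sˣ) (h : H) (r : R) :
    cpT ι u (Finsupp.single h r) = ι r * ↑(u h) := by
  simp [cpT]

lemma cp_mul {H : Type*} [Group H] (ι : R →+* S) (u : H → Sˣ)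
    (x y : H) (r s s₂ t t₂ : R)
    (hs₂ : ι s₂ = ↑(u x) * ι s * ↑(u x)⁻¹)
    (ht : ι t = ↑(u (x*y))⁻¹ * ↑(u x) * ↑(u y))
    (ht₂ : ι t₂ = ↑(u (x*y)) * ι t * ↑(u (x*y))⁻¹) :
    (ι r * ↑(u x)) * (ι s * ↑(u y)) = ι (r * s₂ * t₂) * ↑(u (x*y)) := by
  rw [map_mul, map_mul, hs₂, ht₂, ht]
  simp [mul_assoc, Units.mul_inv_cancel_left, Units.inv_mul_cancel_left]

lemma conj_flip (v : Sˣ) (a b : S) (h : a = ↑v * b * ↑v⁻¹) : b = ↑v⁻¹ * a * ↑v := by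
  rw [h]; simp [mul_assoc]

lemma conj_flip' (v : Sˣ) (a b : S) (h : b = ↑v⁻¹ * a * ↑v) : a = ↑v * b * ↑v⁻¹ := by
  rw [h]; simp [mul_assoc]

end

/-- (Extension step in the proof of Proposition 7.6 of the paper.)  Let `H` be a group, `S` a
crossed product of `R` by `H` (inclusion `ι`, distinguished units `u`) and `S'` a crossed
product of `R'` by `H` (inclusion `ι'`, distinguished units `u'`).  If `φ : R ≃+* R'` is a ring
isomorphism intertwining the actions (1) and matching the twistings (2), then `φ` extends
uniquely to a ring isomorphism `Φ : S ≃+* S'` with `Φ (u h) = u' h` for all `h`. -/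

theorem crossedProduct_equiv_extension
    (H : Type*) [Group H]
    (R S R' S' : Type*) [Ring R] [Ring S] [Ring R'] [Ring S']
    (ι : R →+* S) (hinj : Function.Injective ι)
    (u : H → Sˣ) (hu_one : u 1 = 1)
    (hbasis : ∀ s : S, ∃! c : H →₀ R, s = c.sum fun h r => ι r * ↑(u h))
    (hconj : ∀ (h : H) (r : R),
      (↑(u h)⁻¹ * ι r * ↑(u h)) ∈ Set.range ι ∧
      (↑(u h) * ι r * ↑(u h)⁻¹) ∈ Set.range ι)
    (htwist : ∀ x y : H,
      (↑(u (x * y))⁻¹ * ↑(u x) * ↑(u y) : S) ∈ Set.range ι ∧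
      (↑((u x * u y)⁻¹) * ↑(u (x * y)) : S) ∈ Set.range ι)
    (ι' : R' →+* S') (hinj' : Function.Injective ι')
    (u' : H → S'ˣ) (hu_one' : u' 1 = 1)
    (hbasis' : ∀ s : S', ∃! c : H →₀ R', s = c.sum fun h r => ι' r * ↑(u' h))
    (hconj' : ∀ (h : H) (r : R'),
      (↑(u' h)⁻¹ * ι' r * ↑(u' h)) ∈ Set.range ι' ∧
      (↑(u' h) * ι' r * ↑(u' h)⁻¹) ∈ Set.range ι')
    (htwist' : ∀ x y : H,
      (↑(u' (x * y))⁻¹ * ↑(u' x) * ↑(u' y) : S') ∈ Set.range ι' ∧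
      (↑((u' x * u' y)⁻¹) * ↑(u' (x * y)) : S') ∈ Set.range ι')
    (φ : R ≃+* R')
    (hact : ∀ (h : H) (r r₁ : R),
      ι r₁ = ↑(u h)⁻¹ * ι r * ↑(u h) →
      ι' (φ r₁) = ↑(u' h)⁻¹ * ι' (φ r) * ↑(u' h))
    (htw : ∀ (x y : H) (t : R),
      ι t = ↑(u (x * y))⁻¹ * ↑(u x) * ↑(u y) →
      ι' (φ t) = ↑(u' (x * y))⁻¹ * ↑(u' x) * ↑(u' y)) :
    ∃! Φ : S ≃+* S',
      (∀ r : R, Φ (ι r) = ι' (φ r)) ∧ (∀ h : H, Φ ↑(u h) = ↑(u' h)) := by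
  classical
  have hbij : Function.Bijective (cpT ι u) := by
    constructor
    · intro a b hab
      exact (hbasis (cpT ι u a)).unique (cpT_apply ι u a)
        (by rw [hab]; exact cpT_apply ι u b)
    · intro s
      obtain ⟨c, hc, -⟩ := hbasis s
      exact ⟨c, ((cpT_apply ι u c).trans hc.symm)⟩
  have hbij' : Function.Bijective (cpT ι' u') := by
    constructor
    · intro a b hab
      exact (hbasis' (cpT ι' u' a)).unique (cpT_apply ι' u' a)
        (by rw [hab]; exact cpT_apply ι' u' b)
    · intro s
      obtain ⟨c, hc, -⟩ := hbasis' s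
      exact ⟨c, ((cpT_apply ι' u' c).trans hc.symm)⟩
  let E : (H →₀ R) ≃+ S := AddEquiv.ofBijective (cpT ι u) hbij
  let E' : (H →₀ R') ≃+ S' := AddEquiv.ofBijective (cpT ι' u') hbij'
  let M : (H →₀ R) ≃+ (H →₀ R') := Finsupp.mapRange.addEquiv φ.toAddEquiv
  let Φ₀ : S ≃+ S' := (E.symm.trans M).trans E'
  have hΦ₀ : ∀ c : H →₀ R, Φ₀ (cpT ι u c) = cpT ι' u' (c.mapRange φ (map_zero φ)) := by
    intro c
    show E' (M (E.symm (E c))) = _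
    rw [AddEquiv.symm_apply_apply]
    rfl
  have keyb : ∀ (h : H) (r : R), Φ₀ (ι r * ↑(u h)) = ι' (φ r) * ↑(u' h) := by
    intro h r
    rw [← cpT_single ι u, hΦ₀, Finsupp.mapRange_single, cpT_single]
  have hmulb : ∀ (x : H) (r : R) (y : H) (s : R),
      Φ₀ ((ι r * ↑(u x)) * (ι s * ↑(u y))) = Φ₀ (ι r * ↑(u x)) * Φ₀ (ι s * ↑(u y)) := by
    intro x r y s
    obtain ⟨s₂, hs₂⟩ := (hconj x s).2
    obtain ⟨t, ht⟩ := (htwist x y).1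
    obtain ⟨t₂, ht₂⟩ := (hconj (x*y) t).2
    have hs₂' : ι' (φ s₂) = ↑(u' x) * ι' (φ s) * ↑(u' x)⁻¹ :=
      conj_flip' _ _ _ (hact x s₂ s (conj_flip _ _ _ hs₂))
    have ht' : ι' (φ t) = ↑(u' (x*y))⁻¹ * ↑(u' x) * ↑(u' y) := htw x y t ht
    have ht₂' : ι' (φ t₂) = ↑(u' (x*y)) * ι' (φ t) * ↑(u' (x*y))⁻¹ :=
      conj_flip' _ _ _ (hact (x*y) t₂ t (conj_flip _ _ _ ht₂))
    rw [cp_mul ι u x y r s s₂ t t₂ hs₂ ht ht₂, keyb, keyb, keyb,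
      cp_mul ι' u' x y (φ r) (φ s) (φ s₂) (φ t) (φ t₂) hs₂' ht' ht₂']
    simp [map_mul]
  have hmul : ∀ a b : S, Φ₀ (a * b) = Φ₀ a * Φ₀ b := by
    have step1 : ∀ (x : H) (r : R) (b : S),
        Φ₀ ((ι r * ↑(u x)) * b) = Φ₀ (ι r * ↑(u x)) * Φ₀ b := by
      intro x r b
      obtain ⟨c, hc, -⟩ := hbasis b
      rw [hc, Finsupp.mul_sum, map_finsuppSum, map_finsuppSum, Finsupp.mul_sum]
      exact Finsupp.sum_congr fun y hy => hmulb x r y _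
    intro a b
    obtain ⟨c, hc, -⟩ := hbasis a
    rw [hc, Finsupp.sum_mul, map_finsuppSum, map_finsuppSum, Finsupp.sum_mul]
    exact Finsupp.sum_congr fun x hx => step1 x _ b
  let Φ : S ≃+* S' := { Φ₀ with map_mul' := hmul }
  have hΦι : ∀ r : R, Φ (ι r) = ι' (φ r) := by
    intro r
    have h1 : (ι r : S) = ι r * ↑(u 1) := by simp [hu_one]
    show Φ₀ (ι r) = _
    rw [h1, keyb, hu_one']
    simp
  have hΦu : ∀ h : H, Φ ↑(u h) = ↑(u' h) := by
    intro h
    have h1 : (↑(u h) : S) = ι 1 * ↑(u h) := by simp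
    show Φ₀ ↑(u h) = _
    rw [h1, keyb]
    simp
  refine ⟨Φ, ⟨hΦι, hΦu⟩, ?_⟩
  intro Ψ ⟨hΨι, hΨu⟩
  refine RingEquiv.ext fun s => ?_
  obtain ⟨c, hc, -⟩ := hbasis s
  rw [hc, map_finsuppSum, map_finsuppSum]
  refine Finsupp.sum_congr fun h hh => ?_
  rw [map_mul, map_mul, hΨι, hΨu, hΦι, hΦu]
end
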